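/- For separable matrix-valued kernels k⃗_i(x,z) = k_i(x,z) L with sup_x k_i(x,x) ≤ κ and tr(L) ≤ τ, the empirical Rademacher complexity of the hypothesis class H_λ^p (functions f = ∑ f_j with l_p aggregated RKHS norm at most λ) satisfies R̂_l(H_λ^p) ≤ λ m √(κτ/l) for any 1 ≤ p ≤ ∞. -/

import Mathlib

open scoped BigOperators RealInnerProductSpace
open Matrix

/-- Sign vector associated with a boolean assignment. -/
def radSign (b : Bool) : ℝ := if b then 1 else -1

/-!
For a fixed sign pattern `σ` the objective is `∑ⱼ ⟪vⱼ(σ), hⱼ⟫` with `vⱼ(σ) = ∑ᵤ σᵤ Kⱼ(x_u)`, and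
every component of a point of the `ℓ_p`-aggregated ball has norm at most `λ`, so the supremum is at
most `λ ∑ⱼ ‖vⱼ(σ)‖`. Rademacher signs are orthogonal, hence `E‖vⱼ‖² = ∑ᵤ ‖Kⱼ(x_u)‖²`, and by
Cauchy–Schwarz `E‖vⱼ‖ ≤ √(E‖vⱼ‖²)`. For a separable kernel `∑ᵤ ‖Kⱼ(x_u)‖² = tr L · ∑ᵢ kⱼ(xᵢ, xᵢ)`,
which is at most `l κ τ`.
-/

lemma radSign_mul_self (b : Bool) : radSign b * radSign b = 1 := by
  cases b <;> simp [radSign]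

lemma radSign_not (b : Bool) : radSign (!b) = -radSign b := by
  cases b <;> simp [radSign]

section Rademacher

variable {I : Type*} [Fintype I] [DecidableEq I]

-- Flipping the sign at `u` is a fixed-point-free involution that negates every summand.
lemma sum_radSign_mul_radSign_of_ne {u u' : I} (h : u ≠ u') :
    ∑ σ : I → Bool, radSign (σ u) * radSign (σ u') = 0 := by
  refine Finset.sum_ninvolution (fun σ => Function.update σ u (!σ u)) (fun σ => ?_)
    (fun σ _ hσ => ?_) (fun σ => Finset.mem_univ _) (fun σ => ?_)
  · simp [Function.update_of_ne h.symm, radSign_not]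
  · simpa using congrFun hσ u
  · simp

lemma sum_radSign_mul_radSign (u u' : I) :
    ∑ σ : I → Bool, radSign (σ u) * radSign (σ u') =
      if u = u' then 2 ^ Fintype.card I else 0 := by
  split_ifs with h
  · subst h
    simp [radSign_mul_self]
  · exact sum_radSign_mul_radSign_of_ne h

end Rademacher

def radSum {I E : Type*} [Fintype I] [AddCommGroup E] [Module ℝ E] (v : I → E) (σ : I → Bool) :
    E :=
  ∑ u, radSign (σ u) • v u

section RademacherSum

variable {I E : Type*} [Fintype I] [DecidableEq I] [NormedAddCommGroup E] [InnerProductSpace ℝ E]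

lemma sum_norm_radSum_sq (v : I → E) :
    ∑ σ, ‖radSum v σ‖ ^ 2 = 2 ^ Fintype.card I * ∑ u, ‖v u‖ ^ 2 := by
  have expand : ∀ σ, ‖radSum v σ‖ ^ 2 =
      ∑ u, ∑ u', radSign (σ u) * radSign (σ u') * ⟪v u, v u'⟫ := by
    intro σ
    simp only [← real_inner_self_eq_norm_sq, radSum, sum_inner, inner_sum,
      real_inner_smul_left, real_inner_smul_right]
    exact Finset.sum_congr rfl fun _ _ => Finset.sum_congr rfl fun _ _ => by
      rw [real_inner_comm]; ring
  simp_rw [expand, Finset.sum_comm (γ := I → Bool), ← Finset.sum_mul,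
    sum_radSign_mul_radSign, ite_mul, zero_mul, Finset.sum_ite_eq, Finset.mem_univ, if_true,
    real_inner_self_eq_norm_sq, Finset.mul_sum]

lemma sum_norm_radSum_le (v : I → E) :
    ∑ σ, ‖radSum v σ‖ ≤ 2 ^ Fintype.card I * √(∑ u, ‖v u‖ ^ 2) := by
  calc ∑ σ, ‖radSum v σ‖
      ≤ √(Fintype.card (I → Bool) * ∑ σ, ‖radSum v σ‖ ^ 2) :=
        Real.le_sqrt_of_sq_le sq_sum_le_card_mul_sum_sq
    _ = √((2 ^ Fintype.card I) ^ 2 * ∑ u, ‖v u‖ ^ 2) := by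
        rw [sum_norm_radSum_sq, Fintype.card_fun, Fintype.card_bool]
        push_cast; ring_nf
    _ = 2 ^ Fintype.card I * √(∑ u, ‖v u‖ ^ 2) := by
        rw [Real.sqrt_mul (by positivity), Real.sqrt_sq (by positivity)]

end RademacherSum

lemma le_rpow_sum_rpow_one_div {ι : Type*} [Fintype ι] {a : ι → ℝ} (ha : ∀ i, 0 ≤ a i)
    {p : ℝ} (hp : 0 < p) (j : ι) : a j ≤ (∑ i, a i ^ p) ^ (1 / p) := by
  calc a j = (a j ^ p) ^ (1 / p) := by
        rw [← Real.rpow_mul (ha j), mul_one_div_cancel hp.ne', Real.rpow_one]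
    _ ≤ (∑ i, a i ^ p) ^ (1 / p) :=
        Real.rpow_le_rpow (Real.rpow_nonneg (ha j) p)
          (Finset.single_le_sum (fun i _ => Real.rpow_nonneg (ha i) p) (Finset.mem_univ j))
          (by positivity)

section Dual

variable {ι : Type*} [Fintype ι] {H : ι → Type*} [∀ j, NormedAddCommGroup (H j)]
  [∀ j, InnerProductSpace ℝ (H j)]

lemma sSup_sum_inner_le {p lam : ℝ} (hp : 0 < p) (hlam : 0 ≤ lam) (w : ∀ j, H j) :
    sSup {s : ℝ | ∃ h : ∀ j, H j, (∑ j, ‖h j‖ ^ p) ^ (1 / p) ≤ lam ∧ s = ∑ j, ⟪w j, h j⟫}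
      ≤ lam * ∑ j, ‖w j‖ := by
  refine Real.sSup_le ?_ (by positivity)
  rintro s ⟨h, hh, rfl⟩
  have hnorm (j : ι) : ‖h j‖ ≤ lam :=
    (le_rpow_sum_rpow_one_div (fun i => norm_nonneg (h i)) hp j).trans hh
  calc ∑ j, ⟪w j, h j⟫ ≤ ∑ j, ‖w j‖ * lam :=
        Finset.sum_le_sum fun j _ =>
          (real_inner_le_norm _ _).trans (mul_le_mul_of_nonneg_left (hnorm j) (norm_nonneg _))
    _ = lam * ∑ j, ‖w j‖ := by rw [← Finset.sum_mul, mul_comm]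

lemma sum_radSign_mul_sum_inner {I : Type*} [Fintype I] (K : ∀ j, I → H j) (σ : I → Bool)
    (h : ∀ j, H j) :
    ∑ u, radSign (σ u) * ∑ j, ⟪K j u, h j⟫ = ∑ j, ⟪radSum (K j) σ, h j⟫ := by
  simp only [radSum, sum_inner, real_inner_smul_left, Finset.mul_sum]
  exact Finset.sum_comm

end Dual

lemma sum_norm_sq_eq_trace_mul_sum {X H ι κ : Type*} [Fintype ι] [Fintype κ]
    [NormedAddCommGroup H] [InnerProductSpace ℝ H] (K : X → κ → H) (k : X → X → ℝ)
    (L : Matrix κ κ ℝ) (hker : ∀ x a, k x x * L a a = ⟪K x a, K x a⟫) (x : ι → X) :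
    ∑ u : ι × κ, ‖K (x u.1) u.2‖ ^ 2 = L.trace * ∑ i, k (x i) (x i) := by
  simp only [← real_inner_self_eq_norm_sq, ← hker, Fintype.sum_prod_type, ← Finset.sum_mul_sum,
    Matrix.trace, Matrix.diag]
  exact mul_comm _ _

lemma sqrt_mul_le_sqrt_mul {a b c d : ℝ} (ha : 0 ≤ a) (hab : a ≤ b) (hcd : c ≤ d)
    (hac : 0 ≤ a * c) : √(a * c) ≤ √(b * d) := by
  rcases ha.eq_or_lt with rfl | ha
  · simp
  · have hc : 0 ≤ c := nonneg_of_mul_nonneg_right hac ha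
    exact Real.sqrt_le_sqrt (mul_le_mul hab hcd hc (ha.le.trans hab))

lemma sum_norm_radSum_separable_le {X H ι κ : Type*} [Fintype ι] [DecidableEq ι] [Fintype κ]
    [DecidableEq κ] [NormedAddCommGroup H] [InnerProductSpace ℝ H] (K : X → κ → H)
    (k : X → X → ℝ) {L : Matrix κ κ ℝ} (hL : L.PosSemidef)
    (hker : ∀ x a, k x x * L a a = ⟪K x a, K x a⟫) {c t : ℝ} (hk : ∀ x, k x x ≤ c)
    (ht : L.trace ≤ t) (x : ι → X) :
    ∑ σ, ‖radSum (fun u : ι × κ => K (x u.1) u.2) σ‖ ≤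
      2 ^ (Fintype.card ι * Fintype.card κ) * √(Fintype.card ι * (c * t)) := by
  have hT := sum_norm_sq_eq_trace_mul_sum K k L hker x
  have hsum : ∑ i, k (x i) (x i) ≤ Fintype.card ι * c := by
    simpa using Finset.sum_le_sum fun i (_ : i ∈ Finset.univ) => hk (x i)
  calc _ ≤ 2 ^ Fintype.card (ι × κ) * √(∑ u : ι × κ, ‖K (x u.1) u.2‖ ^ 2) :=
        sum_norm_radSum_le _
    _ ≤ 2 ^ (Fintype.card ι * Fintype.card κ) * √(t * (Fintype.card ι * c)) := by
        rw [Fintype.card_prod, hT]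
        exact mul_le_mul_of_nonneg_left
          (sqrt_mul_le_sqrt_mul hL.trace_nonneg ht hsum (hT ▸ by positivity)) (by positivity)
    _ = _ := by ring_nf

lemma one_div_mul_sqrt_mul_eq_sqrt_div {l : ℝ} (hl : 0 ≤ l) (c : ℝ) :
    1 / l * √(l * c) = √(c / l) := by
  rcases hl.eq_or_lt with rfl | hl
  · simp
  · rw [show c / l = l * c / l ^ 2 by field_simp, Real.sqrt_div' _ (by positivity),
      Real.sqrt_sq hl.le, one_div_mul_eq_div]

theorem rademacher_bound_separable_dictionary_general
    {X : Type*} {n m l : ℕ}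
    (H : Fin m → Type) [∀ j, NormedAddCommGroup (H j)] [∀ j, InnerProductSpace ℝ (H j)]
    (Ksec : ∀ j, X → Fin n → H j)
    -- scalar kernels and a shared PSD output matrix
    (k : Fin m → X → X → ℝ) (L : Matrix (Fin n) (Fin n) ℝ) (hL : L.PosSemidef)
    -- separable kernels:  k⃗ⱼ(x,z)_{ab} = kⱼ(x,z) L_{ab} = ⟪Kⱼ(x)a, Kⱼ(z)b⟫
    (hker : ∀ j x z a b, k j x z * L a b = ⟪Ksec j x a, Ksec j z b⟫)
    (κ τ : ℝ) (hκ : ∀ j x', k j x' x' ≤ κ) (hτ : L.trace ≤ τ)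
    (p : ℝ) (hp : 1 ≤ p) (lam : ℝ) (hlam : 0 ≤ lam)
    (x : Fin l → X) :
    (1 / (l : ℝ)) * ((1 / (2 ^ (n * l) : ℝ)) *
      ∑ σ : Fin l × Fin n → Bool,
        sSup {s : ℝ | ∃ h : ∀ j, H j,
          ((∑ j, ‖h j‖ ^ p) ^ (1 / p)) ≤ lam ∧
          s = ∑ i, ∑ a, radSign (σ (i, a)) * (∑ j, ⟪Ksec j (x i) a, h j⟫)})
    ≤ lam * m * Real.sqrt (κ * τ / l) := by
  set F : ∀ j, Fin l × Fin n → H j := fun j u => Ksec j (x u.1) u.2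
  have hsup (σ : Fin l × Fin n → Bool) :
      sSup {s : ℝ | ∃ h : ∀ j, H j, ((∑ j, ‖h j‖ ^ p) ^ (1 / p)) ≤ lam ∧
          s = ∑ i, ∑ a, radSign (σ (i, a)) * (∑ j, ⟪Ksec j (x i) a, h j⟫)}
        ≤ lam * ∑ j, ‖radSum (F j) σ‖ := by
    have hobj (h : ∀ j, H j) :
        ∑ i, ∑ a, radSign (σ (i, a)) * (∑ j, ⟪Ksec j (x i) a, h j⟫) =
          ∑ j, ⟪radSum (F j) σ, h j⟫ := by
      rw [← sum_radSign_mul_sum_inner, ← Fintype.sum_prod_type']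
    simp only [hobj]
    exact sSup_sum_inner_le (by linarith) hlam _
  have hmoment (j : Fin m) :
      1 / (2 ^ (n * l) : ℝ) * ∑ σ, ‖radSum (F j) σ‖ ≤ √(l * (κ * τ)) := by
    have := sum_norm_radSum_separable_le (Ksec j) (k j) hL (fun x a => hker j x x a a) (hκ j) hτ x
    rw [Fintype.card_fin, Fintype.card_fin, mul_comm l n] at this
    rwa [one_div_mul_eq_div, div_le_iff₀ (by positivity), mul_comm]
  calc _ ≤ 1 / (l : ℝ) * (1 / (2 ^ (n * l) : ℝ) * ∑ σ, lam * ∑ j, ‖radSum (F j) σ‖) := by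
        gcongr with σ; exact hsup σ
    _ = 1 / (l : ℝ) * lam * ∑ j, 1 / (2 ^ (n * l) : ℝ) * ∑ σ, ‖radSum (F j) σ‖ := by
        simp_rw [Finset.mul_sum]
        rw [Finset.sum_comm]
        exact Finset.sum_congr rfl fun _ _ => Finset.sum_congr rfl fun _ _ => by ring
    _ ≤ 1 / (l : ℝ) * lam * ∑ _j : Fin m, √(l * (κ * τ)) := by gcongr with j; exact hmoment j
    _ = lam * m * √(κ * τ / l) := by
        rw [Finset.sum_const, Finset.card_univ, Fintype.card_fin, nsmul_eq_mul,
          ← one_div_mul_sqrt_mul_eq_sqrt_div (Nat.cast_nonneg l)]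
        ring

theorem rademacher_bound_separable_dictionary
    {X : Type*} {n m l : ℕ} (hl : 0 < l)
    (H : Fin m → Type) [∀ j, NormedAddCommGroup (H j)] [∀ j, InnerProductSpace ℝ (H j)]
    (Ksec : ∀ j, X → Fin n → H j)
    -- scalar kernels and a shared PSD output matrix
    (k : Fin m → X → X → ℝ) (L : Matrix (Fin n) (Fin n) ℝ) (hL : L.PosSemidef)
    -- separable kernels:  k⃗ⱼ(x,z)_{ab} = kⱼ(x,z) L_{ab} = ⟪Kⱼ(x)a, Kⱼ(z)b⟫
    (hker : ∀ j x z a b, k j x z * L a b = ⟪Ksec j x a, Ksec j z b⟫)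
    (κ τ : ℝ) (hκ : ∀ j x', k j x' x' ≤ κ) (hτ : L.trace ≤ τ)
    (p : ℝ) (hp : 1 ≤ p) (lam : ℝ) (hlam : 0 ≤ lam)
    (x : Fin l → X) :
    (1 / (l : ℝ)) * ((1 / (2 ^ (n * l) : ℝ)) *
      ∑ σ : Fin l × Fin n → Bool,
        sSup {s : ℝ | ∃ h : ∀ j, H j,
          ((∑ j, ‖h j‖ ^ p) ^ (1 / p)) ≤ lam ∧
          s = ∑ i, ∑ a, radSign (σ (i, a)) * (∑ j, ⟪Ksec j (x i) a, h j⟫)})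
    ≤ lam * m * Real.sqrt (κ * τ / l) :=
  rademacher_bound_separable_dictionary_general H Ksec k L hL hker κ τ hκ hτ p hp lam hlam x
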